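/- Let w = x_1 ... x_n be a Gog word with corresponding monotone triangle a, let x_m = (p_1, q_1, ..., p_{k-1}, q_{k-1}, p_k) with k ≥ 2, and fix l < k. If p_l = a_{m,r}, q_l = a_{m-1,s} and p_{l+1} = a_{m,t} (i.e., r, s, t are the column positions of p_l in row m, of q_l in row m-1, and of p_{l+1} in row m, respectively), then r ≤ s < t. -/

import Mathlib

/-- `v` occurs at an odd-numbered (1-indexed) position of the tuple `t`
(modelled as a list; position `j+1` is odd iff the 0-based index `j` is even). -/
def OddPos (t : List ℕ) (v : ℕ) : Prop :=
  ∃ j, j < t.length ∧ j % 2 = 0 ∧ t.getD j 0 = v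

/-- `v` occurs at an even-numbered (1-indexed) position of the tuple `t`. -/
def EvenPos (t : List ℕ) (v : ℕ) : Prop :=
  ∃ j, j < t.length ∧ j % 2 = 1 ∧ t.getD j 0 = v

/-- A Gog word of size `n`: a sequence `x 1, …, x n` of strictly increasing tuples of
odd length, with entries in `{1, …, n}`, such that every integer occurring in an
even-numbered position of some tuple also occurs at an odd-numbered position of an
earlier and of a later tuple, and the successive occurrences of any repeated integer
alternate between odd- and even-numbered positions. -/
def IsGogWord (n : ℕ) (x : ℕ → List ℕ) : Prop :=
  (∀ i, 1 ≤ i → i ≤ n → (x i).length % 2 = 1) ∧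
  (∀ i, 1 ≤ i → i ≤ n → List.Pairwise (· < ·) (x i)) ∧
  (∀ i, 1 ≤ i → i ≤ n → ∀ v ∈ x i, 1 ≤ v ∧ v ≤ n) ∧
  (∀ i, 1 ≤ i → i ≤ n → ∀ v, EvenPos (x i) v →
     (∃ i', 1 ≤ i' ∧ i' < i ∧ OddPos (x i') v) ∧
     (∃ i', i < i' ∧ i' ≤ n ∧ OddPos (x i') v)) ∧
  (∀ v i i', 1 ≤ i → i < i' → i' ≤ n → v ∈ x i → v ∈ x i' →
     (∀ l, i < l → l < i' → v ∉ x l) → (OddPos (x i) v ↔ ¬ OddPos (x i') v))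

/-- `m` is active with respect to the tuple `t = (p 1, q 1, …, p (k-1), q (k-1), p k)`
if `m > p k` (the last entry) or `p j < m < q j` for some `j ≤ k - 1`. -/
def ActiveWrt (t : List ℕ) (m : ℕ) : Prop :=
  t.getD (t.length - 1) 0 < m ∨
  ∃ j, 2 * j + 1 < t.length ∧ t.getD (2 * j) 0 < m ∧ m < t.getD (2 * j + 1) 0

/-- The integers `(c, a, b)` form a 312-subpattern of the Gog word `x` at positions
`(i, j, k)`: `i < j < k`; `c, a, b` appear at odd-numbered positions of
`x i, x j, x k` respectively; `b` is not at an even-numbered position of any of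
`x (i+1), …, x (k-1)`; `b` is active with respect to `x j`; and `a < b < c`. -/
def Is312At (x : ℕ → List ℕ) (c a b : ℕ) (i j k : ℕ) : Prop :=
  i < j ∧ j < k ∧
  OddPos (x i) c ∧ OddPos (x j) a ∧ OddPos (x k) b ∧
  (∀ l, i < l → l < k → ¬ EvenPos (x l) b) ∧
  ActiveWrt (x j) b ∧ a < b ∧ b < c

/-- `a` is the monotone triangle corresponding to the Gog word `x` of size `n`:
each row is strictly increasing, row 1 consists of the single entry of `x 1`, and
(as a set) row `i+1` is obtained from row `i` by removing the entries at
even-numbered positions of `x (i+1)` and adjoining those at odd-numbered positions. -/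
def GogTriangle (n : ℕ) (x : ℕ → List ℕ) (a : ℕ → ℕ → ℕ) : Prop :=
  (∀ i, 1 ≤ i → i ≤ n → ∀ j j', 1 ≤ j → j < j' → j' ≤ i → a i j < a i j') ∧
  (1 ≤ n → a 1 1 = (x 1).getD 0 0) ∧
  (∀ i, 1 ≤ i → i + 1 ≤ n →
    {v | ∃ j, 1 ≤ j ∧ j ≤ i + 1 ∧ a (i + 1) j = v} =
      ({v | ∃ j, 1 ≤ j ∧ j ≤ i ∧ a i j = v} \ {v | EvenPos (x (i + 1)) v}) ∪
        {v | OddPos (x (i + 1)) v})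

/-- A set of natural numbers consists of consecutive integers if it is an interval
`{m, m+1, …, M}`. -/
def ConsecSet (S : Set ℕ) : Prop := ∃ m M, S = Set.Icc m M

/-! Row `m` of the triangle arises from row `m - 1` by deleting the entries `q_j` of `x m` and
adding its entries `p_j`; by the alternation of occurrences every `q_j` lies in row `m - 1` and
no `p_j` does. In a strictly increasing row the column of a value is the number of entries
`≤` it. Writing `N(v)` for the number of entries `≤ v` of row `m - 1`, counting up to `p_{l+1}`
gives `t = N(p_{l+1}) - l + (l + 1) ≥ N(q_l) + 1 = s + 1`, and counting up to `p_l` gives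
`r = N(p_l) - (l - 1) + l = N(p_l) + 1 ≤ N(q_l) = s`, the last step because `q_l > p_l` is
itself in row `m - 1`. -/

open Finset

theorem Finset.card_filter_image_of_injOn {α β : Type*} [DecidableEq β] {f : α → β}
    {s : Finset α} (hf : Set.InjOn f s) {p : β → Prop} [DecidablePred p] {q : α → Prop}
    [DecidablePred q] (h : ∀ c ∈ s, p (f c) ↔ q c) :
    #((s.image f).filter p) = #(s.filter q) := by
  rw [filter_image, card_image_of_injOn (hf.mono (filter_subset _ s)), filter_congr h]

theorem Finset.card_filter_sdiff_union_add {α : Type*} [DecidableEq α] {s e o : Finset α}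
    (he : e ⊆ s) (ho : Disjoint s o) (p : α → Prop) [DecidablePred p] :
    #(((s \ e) ∪ o).filter p) + #(e.filter p) = #(s.filter p) + #(o.filter p) := by
  have hsplit : ((s \ e) ∪ o).filter p = (s.filter p \ e.filter p) ∪ o.filter p := by
    ext; simp only [mem_filter, mem_union, mem_sdiff]; tauto
  have hdisj : Disjoint (s.filter p \ e.filter p) (o.filter p) :=
    (disjoint_filter_filter ho).mono_left sdiff_subset
  rw [hsplit, card_union_of_disjoint hdisj]
  have := card_sdiff_add_card_eq_card (filter_subset_filter p he)
  omega

theorem Finset.card_filter_le_lt_card_filter_le {α : Type*} [LinearOrder α] {s : Finset α}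
    {u v : α} (hu : u ∈ s) (hvu : v < u) : #(s.filter (· ≤ v)) < #(s.filter (· ≤ u)) := by
  refine card_lt_card ((ssubset_iff_of_subset ?_).2 ⟨u, mem_filter.2 ⟨hu, le_rfl⟩, ?_⟩)
  · exact monotone_filter_right s fun _ _ h => h.trans hvu.le
  · exact fun h => (mem_filter.1 h).2.not_gt hvu

theorem List.strictMonoOn_getD {t : List ℕ} (h : t.Pairwise (· < ·)) :
    StrictMonoOn (fun i => t.getD i 0) (Set.Iio t.length) := by
  intro i hi j hj hij
  simp only [Set.mem_Iio] at hi hj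
  simp only [List.getD_eq_getElem t 0 hi, List.getD_eq_getElem t 0 hj]
  exact List.pairwise_iff_getElem.1 h i j hi hj hij

section Positions

variable {t : List ℕ} {v : ℕ}

theorem OddPos.mem (h : OddPos t v) : v ∈ t := by
  obtain ⟨j, hj, -, rfl⟩ := h
  rw [List.getD_eq_getElem t 0 hj]
  exact List.getElem_mem hj

theorem EvenPos.mem (h : EvenPos t v) : v ∈ t := by
  obtain ⟨j, hj, -, rfl⟩ := h
  rw [List.getD_eq_getElem t 0 hj]
  exact List.getElem_mem hj

theorem oddPos_or_evenPos_of_mem (h : v ∈ t) : OddPos t v ∨ EvenPos t v := by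
  obtain ⟨j, hj, rfl⟩ := List.mem_iff_getElem.1 h
  rw [← List.getD_eq_getElem t 0 hj]
  rcases Nat.mod_two_eq_zero_or_one j with h2 | h2
  · exact .inl ⟨j, hj, h2, rfl⟩
  · exact .inr ⟨j, hj, h2, rfl⟩

theorem EvenPos.not_oddPos (hs : t.Pairwise (· < ·)) (he : EvenPos t v) : ¬ OddPos t v := by
  rintro ⟨i, hi, hi2, rfl⟩
  obtain ⟨j, hj, hj2, hji⟩ := he
  have : j = i := (List.strictMonoOn_getD hs).injOn hj hi hji
  omega

def oddEntries (t : List ℕ) : Finset ℕ :=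
  (range ((t.length + 1) / 2)).image fun c => t.getD (2 * c) 0

def evenEntries (t : List ℕ) : Finset ℕ :=
  (range (t.length / 2)).image fun c => t.getD (2 * c + 1) 0

theorem mem_oddEntries : v ∈ oddEntries t ↔ OddPos t v := by
  simp only [oddEntries, mem_image, mem_range]
  constructor
  · rintro ⟨c, hc, rfl⟩
    exact ⟨2 * c, by omega, by omega, rfl⟩
  · rintro ⟨j, hj, hj2, rfl⟩
    exact ⟨j / 2, by omega, by congr 1; omega⟩

theorem mem_evenEntries : v ∈ evenEntries t ↔ EvenPos t v := by
  simp only [evenEntries, mem_image, mem_range]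
  constructor
  · rintro ⟨c, hc, rfl⟩
    exact ⟨2 * c + 1, by omega, by omega, rfl⟩
  · rintro ⟨j, hj, hj2, rfl⟩
    exact ⟨j / 2, by omega, by congr 1; omega⟩

theorem card_filter_oddEntries_le_getD (hs : t.Pairwise (· < ·)) {i : ℕ} (hi : i < t.length) :
    #((oddEntries t).filter (· ≤ t.getD i 0)) = i / 2 + 1 := by
  have hmono := List.strictMonoOn_getD hs
  have hmem : ∀ c ∈ range ((t.length + 1) / 2), 2 * c ∈ Set.Iio t.length := by
    intro c hc; simp only [mem_range] at hc; simp only [Set.mem_Iio]; omega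
  rw [oddEntries, card_filter_image_of_injOn (q := (· < i / 2 + 1))]
  · rw [show (range ((t.length + 1) / 2)).filter (· < i / 2 + 1) = range (i / 2 + 1) by
      ext; simp only [mem_filter, mem_range]; omega, card_range]
  · intro c hc c' hc' h
    have := hmono.injOn (hmem c hc) (hmem c' hc') h
    omega
  · intro c hc
    rw [hmono.le_iff_le (hmem c hc) hi]
    omega

theorem card_filter_evenEntries_le_getD (hs : t.Pairwise (· < ·)) {i : ℕ} (hi : i < t.length) :
    #((evenEntries t).filter (· ≤ t.getD i 0)) = (i + 1) / 2 := by
  have hmono := List.strictMonoOn_getD hs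
  have hmem : ∀ c ∈ range (t.length / 2), 2 * c + 1 ∈ Set.Iio t.length := by
    intro c hc; simp only [mem_range] at hc; simp only [Set.mem_Iio]; omega
  rw [evenEntries, card_filter_image_of_injOn (q := (· < (i + 1) / 2))]
  · rw [show (range (t.length / 2)).filter (· < (i + 1) / 2) = range ((i + 1) / 2) by
      ext; simp only [mem_filter, mem_range]; omega, card_range]
  · intro c hc c' hc' h
    have := hmono.injOn (hmem c hc) (hmem c' hc') h
    omega
  · intro c hc
    rw [hmono.le_iff_le (hmem c hc) hi]
    omega

end Positions

theorem Nat.exists_last_of_exists {P : ℕ → Prop} {m : ℕ}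
    (h : ∃ j, 1 ≤ j ∧ j < m ∧ P j) :
    ∃ J, 1 ≤ J ∧ J < m ∧ P J ∧ ∀ j, J < j → j < m → ¬ P j := by
  classical
  obtain ⟨j, hj1, hjm, hj⟩ := h
  refine ⟨Nat.findGreatest P (m - 1), ?_, ?_, Nat.findGreatest_spec (by omega) hj, ?_⟩
  · exact hj1.trans (Nat.le_findGreatest (by omega) hj)
  · have := Nat.findGreatest_le (P := P) (m - 1)
    omega
  · exact fun j' h1 h2 => Nat.findGreatest_is_greatest h1 (by omega)

def rowFinset (a : ℕ → ℕ → ℕ) (i : ℕ) : Finset ℕ := (Icc 1 i).image (a i)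

theorem mem_rowFinset {a : ℕ → ℕ → ℕ} {i v : ℕ} :
    v ∈ rowFinset a i ↔ ∃ j, 1 ≤ j ∧ j ≤ i ∧ a i j = v := by
  simp [rowFinset, and_assoc]

section

variable {n : ℕ} {x : ℕ → List ℕ} {a : ℕ → ℕ → ℕ} {v : ℕ}

theorem IsGogWord.length_one (hw : IsGogWord n x) (hn : 1 ≤ n) : (x 1).length = 1 := by
  by_contra h
  have hE : EvenPos (x 1) ((x 1).getD 1 0) := ⟨1, by have := hw.1 1 le_rfl hn; omega, rfl, rfl⟩
  obtain ⟨⟨i, hi1, hi, -⟩, -⟩ := hw.2.2.2.1 1 le_rfl hn _ hE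
  omega

namespace GogTriangle

theorem strictMonoOn_row (ha : GogTriangle n x a) {i : ℕ} (hi1 : 1 ≤ i) (hin : i ≤ n) :
    StrictMonoOn (a i) (Set.Icc 1 i) :=
  fun j hj j' hj' hjj' => ha.1 i hi1 hin j j' hj.1 hjj' hj'.2

theorem card_filter_rowFinset_le (ha : GogTriangle n x a) {i j : ℕ} (hin : i ≤ n)
    (hj1 : 1 ≤ j) (hji : j ≤ i) : #((rowFinset a i).filter (· ≤ a i j)) = j := by
  have hmono := ha.strictMonoOn_row (hj1.trans hji) hin
  have hj : j ∈ Set.Icc 1 i := ⟨hj1, hji⟩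
  rw [rowFinset, card_filter_image_of_injOn (q := (· ≤ j)) (by simpa using hmono.injOn)]
  · rw [show (Icc 1 i).filter (· ≤ j) = Icc 1 j by
      ext; simp only [mem_filter, mem_Icc]; omega, Nat.card_Icc, Nat.add_sub_cancel]
  · intro c hc
    exact hmono.le_iff_le (by simpa using hc) hj

theorem mem_rowFinset_succ (ha : GogTriangle n x a) {i : ℕ} (hi1 : 1 ≤ i) (hin : i + 1 ≤ n) :
    v ∈ rowFinset a (i + 1) ↔
      (v ∈ rowFinset a i ∧ ¬ EvenPos (x (i + 1)) v) ∨ OddPos (x (i + 1)) v := by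
  simp only [mem_rowFinset]
  exact Set.ext_iff.1 (ha.2.2 i hi1 hin) v

theorem mem_rowFinset_succ_of_not_mem (ha : GogTriangle n x a) {i : ℕ} (hi1 : 1 ≤ i)
    (hin : i + 1 ≤ n) (hv : v ∉ x (i + 1)) :
    v ∈ rowFinset a (i + 1) ↔ v ∈ rowFinset a i := by
  rw [ha.mem_rowFinset_succ hi1 hin]
  have hE : ¬ EvenPos (x (i + 1)) v := fun h => hv h.mem
  have hO : ¬ OddPos (x (i + 1)) v := fun h => hv h.mem
  tauto

theorem mem_rowFinset_one (ha : GogTriangle n x a) (hw : IsGogWord n x) (hn : 1 ≤ n) :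
    v ∈ rowFinset a 1 ↔ v ∈ x 1 := by
  obtain ⟨u, hu⟩ := List.length_eq_one_iff.1 (hw.length_one hn)
  have ha11 : a 1 1 = u := by rw [ha.2.1 hn, hu]; rfl
  simp [rowFinset, ha11, hu]

theorem mem_rowFinset_iff_oddPos (ha : GogTriangle n x a) (hw : IsGogWord n x) {i : ℕ}
    (hi1 : 1 ≤ i) (hin : i ≤ n) (hv : v ∈ x i) : v ∈ rowFinset a i ↔ OddPos (x i) v := by
  obtain rfl | hi2 := hi1.eq_or_lt
  · refine ⟨fun _ => (oddPos_or_evenPos_of_mem hv).resolve_right fun hE => ?_,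
      fun _ => (ha.mem_rowFinset_one hw hin).2 hv⟩
    obtain ⟨⟨j, hj1, hj, -⟩, -⟩ := hw.2.2.2.1 1 le_rfl hin v hE
    omega
  obtain ⟨i, rfl⟩ := Nat.exists_eq_add_of_lt hi2
  rw [ha.mem_rowFinset_succ (by omega) hin]
  rcases oddPos_or_evenPos_of_mem hv with hO | hE <;> tauto

theorem mem_rowFinset_iff_of_last_mem (ha : GogTriangle n x a) (hw : IsGogWord n x)
    {J i : ℕ} (hJ1 : 1 ≤ J) (hJi : J ≤ i) (hin : i ≤ n) (hv : v ∈ x J)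
    (hlast : ∀ j, J < j → j ≤ i → v ∉ x j) : v ∈ rowFinset a i ↔ OddPos (x J) v := by
  induction i, hJi using Nat.le_induction with
  | base => exact ha.mem_rowFinset_iff_oddPos hw hJ1 hin hv
  | succ i hJi ih =>
    rw [ha.mem_rowFinset_succ_of_not_mem (by omega) hin (hlast _ (by omega) le_rfl)]
    exact ih (by omega) fun j h1 h2 => hlast j h1 (by omega)

theorem exists_mem_of_mem_rowFinset (ha : GogTriangle n x a) (hw : IsGogWord n x) {i : ℕ}
    (hi1 : 1 ≤ i) (hin : i ≤ n) (hv : v ∈ rowFinset a i) :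
    ∃ j, 1 ≤ j ∧ j ≤ i ∧ v ∈ x j := by
  induction i, hi1 using Nat.le_induction with
  | base => exact ⟨1, le_rfl, le_rfl, (ha.mem_rowFinset_one hw hin).1 hv⟩
  | succ i hi1 ih =>
    rcases (ha.mem_rowFinset_succ hi1 hin).1 hv with ⟨hv, -⟩ | hO
    · obtain ⟨j, hj1, hji, hj⟩ := ih (by omega) hv
      exact ⟨j, hj1, by omega, hj⟩
    · exact ⟨i + 1, by omega, le_rfl, hO.mem⟩

/-- By alternation, an entry `v` of `x m` that occurred before is in row `m - 1` exactly
when its last earlier occurrence is odd, i.e. when its occurrence in `x m` is not. -/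
theorem mem_rowFinset_pred_iff (ha : GogTriangle n x a) (hw : IsGogWord n x) {m : ℕ}
    (hm2 : 2 ≤ m) (hmn : m ≤ n) (hv : v ∈ x m)
    (hprev : ∃ j, 1 ≤ j ∧ j < m ∧ v ∈ x j) :
    v ∈ rowFinset a (m - 1) ↔ ¬ OddPos (x m) v := by
  obtain ⟨J, hJ1, hJm, hJ, hlast⟩ := Nat.exists_last_of_exists hprev
  rw [ha.mem_rowFinset_iff_of_last_mem hw hJ1 (by omega) (by omega) hJ
    fun j h1 h2 => hlast j h1 (by omega)]
  exact hw.2.2.2.2 v J m hJ1 hJm hmn hJ hv hlast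

theorem evenEntries_subset_rowFinset_pred (ha : GogTriangle n x a) (hw : IsGogWord n x)
    {m : ℕ} (hm2 : 2 ≤ m) (hmn : m ≤ n) : evenEntries (x m) ⊆ rowFinset a (m - 1) := by
  intro v hv
  have hE := mem_evenEntries.1 hv
  obtain ⟨⟨j, hj1, hjm, hj⟩, -⟩ := hw.2.2.2.1 m (by omega) hmn v hE
  exact (ha.mem_rowFinset_pred_iff hw hm2 hmn hE.mem ⟨j, hj1, hjm, hj.mem⟩).2
    (hE.not_oddPos (hw.2.1 m (by omega) hmn))

theorem disjoint_rowFinset_pred_oddEntries (ha : GogTriangle n x a) (hw : IsGogWord n x)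
    {m : ℕ} (hm2 : 2 ≤ m) (hmn : m ≤ n) :
    Disjoint (rowFinset a (m - 1)) (oddEntries (x m)) := by
  refine disjoint_left.2 fun v hv hvO => ?_
  have hO := mem_oddEntries.1 hvO
  obtain ⟨j, hj1, hjm, hj⟩ := ha.exists_mem_of_mem_rowFinset hw (by omega) (by omega) hv
  exact (ha.mem_rowFinset_pred_iff hw hm2 hmn hO.mem ⟨j, hj1, by omega, hj⟩).1 hv hO

theorem rowFinset_eq_sdiff_union (ha : GogTriangle n x a) {m : ℕ} (hm2 : 2 ≤ m)
    (hmn : m ≤ n) :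
    rowFinset a m = (rowFinset a (m - 1) \ evenEntries (x m)) ∪ oddEntries (x m) := by
  obtain ⟨i, rfl⟩ := Nat.exists_eq_add_of_le' (show 1 ≤ m by omega)
  ext v
  rw [ha.mem_rowFinset_succ (by omega) hmn, Nat.add_sub_cancel, mem_union, mem_sdiff,
    mem_evenEntries, mem_oddEntries]

theorem card_filter_rowFinset_add (ha : GogTriangle n x a) (hw : IsGogWord n x) {m : ℕ}
    (hm2 : 2 ≤ m) (hmn : m ≤ n) (p : ℕ → Prop) [DecidablePred p] :
    #((rowFinset a m).filter p) + #((evenEntries (x m)).filter p) =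
      #((rowFinset a (m - 1)).filter p) + #((oddEntries (x m)).filter p) := by
  rw [ha.rowFinset_eq_sdiff_union hm2 hmn]
  exact card_filter_sdiff_union_add (ha.evenEntries_subset_rowFinset_pred hw hm2 hmn)
    (ha.disjoint_rowFinset_pred_oddEntries hw hm2 hmn) p

end GogTriangle

end

theorem columns_of_p_q_p_general (n : ℕ) (x : ℕ → List ℕ) (a : ℕ → ℕ → ℕ)
    (hw : IsGogWord n x) (ha : GogTriangle n x a)
    (m k l : ℕ) (hm2 : 2 ≤ m) (hmn : m ≤ n)
    (hlen : (x m).length = 2 * k - 1) (hl1 : 1 ≤ l) (hlk : l < k)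
    (r s t : ℕ)
    (hr1 : 1 ≤ r) (hrm : r ≤ m) (hr : a m r = (x m).getD (2 * l - 2) 0)
    (hs1 : 1 ≤ s) (hsm : s ≤ m - 1) (hs : a (m - 1) s = (x m).getD (2 * l - 1) 0)
    (ht1 : 1 ≤ t) (htm : t ≤ m) (ht : a m t = (x m).getD (2 * l) 0) :
    r ≤ s ∧ s < t := by
  have hsort := hw.2.1 m (by omega) hmn
  have hr' := ha.card_filter_rowFinset_le hmn hr1 hrm
  have hs' := ha.card_filter_rowFinset_le (by omega) hs1 hsm
  have ht' := ha.card_filter_rowFinset_le hmn ht1 htm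
  have hp := ha.card_filter_rowFinset_add hw hm2 hmn (· ≤ a m r)
  have hp' := ha.card_filter_rowFinset_add hw hm2 hmn (· ≤ a m t)
  rw [hr] at hr' hp
  rw [hs] at hs'
  rw [ht] at ht' hp'
  rw [card_filter_oddEntries_le_getD hsort (by omega),
    card_filter_evenEntries_le_getD hsort (by omega)] at hp hp'
  set R := rowFinset a (m - 1)
  set p := (x m).getD (2 * l - 2) 0
  set q := (x m).getD (2 * l - 1) 0
  set p' := (x m).getD (2 * l) 0
  have hpq : p < q := List.strictMonoOn_getD hsort (by simp; omega) (by simp; omega) (by omega)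
  have hqp' : q < p' := List.strictMonoOn_getD hsort (by simp; omega) (by simp; omega) (by omega)
  have hqR : q ∈ R := ha.evenEntries_subset_rowFinset_pred hw hm2 hmn
    (mem_evenEntries.2 ⟨2 * l - 1, by omega, by omega, rfl⟩)
  have hpq_card := card_filter_le_lt_card_filter_le hqR hpq
  have hqp'_card : #(R.filter (· ≤ q)) ≤ #(R.filter (· ≤ p')) :=
    card_le_card (monotone_filter_right R fun _ _ h => h.trans hqp'.le)
  omega

/-- Let `w = x 1 … x n` be a Gog word with corresponding monotone triangle `a`, let
`x m = (p 1, q 1, …, p (k-1), q (k-1), p k)` with `k ≥ 2` and fix `1 ≤ l < k`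
(so `p l`, `q l`, `p (l+1)` are the entries of `x m` at 0-based indices
`2l - 2`, `2l - 1`, `2l`). If `p l = a m r`, `q l = a (m-1) s` and `p (l+1) = a m t`,
then `r ≤ s < t`. -/
theorem columns_of_p_q_p (n : ℕ) (x : ℕ → List ℕ) (a : ℕ → ℕ → ℕ)
    (hw : IsGogWord n x) (ha : GogTriangle n x a)
    (m k l : ℕ) (hm2 : 2 ≤ m) (hmn : m ≤ n)
    (hk2 : 2 ≤ k) (hlen : (x m).length = 2 * k - 1) (hl1 : 1 ≤ l) (hlk : l < k)
    (r s t : ℕ)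
    (hr1 : 1 ≤ r) (hrm : r ≤ m) (hr : a m r = (x m).getD (2 * l - 2) 0)
    (hs1 : 1 ≤ s) (hsm : s ≤ m - 1) (hs : a (m - 1) s = (x m).getD (2 * l - 1) 0)
    (ht1 : 1 ≤ t) (htm : t ≤ m) (ht : a m t = (x m).getD (2 * l) 0) :
    r ≤ s ∧ s < t :=
  columns_of_p_q_p_general n x a hw ha m k l hm2 hmn hlen hl1 hlk r s t hr1 hrm hr hs1 hsm hs ht1
    htm ht
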